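/- The alternating group A_5 is isomorphic to SL_2(F_4). -/

import Mathlib

/-!
`SL₂(𝔽₄)` acts on the five points of the projective line over `𝔽₄`. The kernel of this action
is the centre, i.e. the scalars `r` with `r ^ 2 = 1`, which is trivial in characteristic two.
Since `|SL₂(𝔽₄)| = |GL₂(𝔽₄)| / 3 = 60`, the image is a subgroup of index two in `S₅`, and the
only such subgroup is `A₅`.
-/

open Matrix Projectivization
open scoped LinearAlgebra.Projectivization

theorem MonoidHom.range_eq_alternatingGroup {G α : Type*} [Group G] [Fintype α] [DecidableEq α]
    {f : G →* Equiv.Perm α} (hf : Function.Injective f)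
    (hG : Nat.card G * 2 = Nat.card (Equiv.Perm α)) : f.range = alternatingGroup α := by
  refine Equiv.Perm.eq_alternatingGroup_of_index_eq_two ?_
  have hpos : Nat.card G ≠ 0 := by
    intro h0
    rw [h0, zero_mul, Nat.card_perm] at hG
    exact (Nat.card α).factorial_ne_zero hG.symm
  apply Nat.eq_of_mul_eq_mul_left (Nat.pos_of_ne_zero hpos)
  rw [hG, ← Subgroup.card_mul_index f.range, Nat.card_congr (MonoidHom.ofInjective hf).toEquiv]

namespace Matrix.SpecialLinearGroup

theorem card_mul_card_sub_one {K : Type*} [Field K] [Finite K]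
    (n : Type*) [Fintype n] [DecidableEq n] [Nonempty n] :
    Nat.card (SpecialLinearGroup n K) * (Nat.card K - 1) = Nat.card (GL n K) := by
  have hrange : (toGL : SpecialLinearGroup n K →* GL n K).range = GeneralLinearGroup.det.ker :=
    SetLike.coe_injective <| by rw [MonoidHom.coe_range, range_toGL]; rfl
  have hindex : (GeneralLinearGroup.det : GL n K →* Kˣ).ker.index = Nat.card K - 1 := by
    rw [Subgroup.index_ker, MonoidHom.range_eq_top.mpr GeneralLinearGroup.det_surjective,
      Subgroup.card_top, Nat.card_units]
  rw [← hindex, ← hrange, Nat.card_congr (MonoidHom.ofInjective toGL_injective).toEquiv,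
    Subgroup.card_mul_index]

theorem card_fin_two_of_card_eq_four {K : Type*} [Field K] [Finite K] (hK : Nat.card K = 4) :
    Nat.card (SpecialLinearGroup (Fin 2) K) = 60 := by
  have := Fintype.ofFinite K
  have h := card_mul_card_sub_one (K := K) (Fin 2)
  rw [card_GL_field, Fin.prod_univ_two, ← Nat.card_eq_fintype_card, hK] at h
  norm_num at h
  omega

theorem center_eq_bot_of_charTwo {R : Type*} [CommRing R] [NoZeroDivisors R] [CharP R 2] :
    Subgroup.center (SpecialLinearGroup (Fin 2) R) = ⊥ := by
  refine (Subgroup.eq_bot_iff_forall _).mpr fun A hA => ?_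
  obtain ⟨r, hr, hA⟩ := mem_center_iff.mp hA
  have hr1 : r = 1 := CharTwo.sq_injective (by simpa using hr)
  ext : 1
  simp [← hA, hr1]

theorem toPermHom_projectivization_injective {K : Type*} [Field K] [CharP K 2] :
    Function.Injective (MulAction.toPermHom (SpecialLinearGroup (Fin 2) K) (ℙ K (Fin 2 → K))) :=
  (MonoidHom.ker_eq_bot_iff _).mp <| by rw [SL_mulAction_ker, center_eq_bot_of_charTwo]

noncomputable def mulEquivAlternatingGroupFinFive {K : Type*} [Field K] [Finite K] [CharP K 2]
    (hK : Nat.card K = 4) : SpecialLinearGroup (Fin 2) K ≃* alternatingGroup (Fin 5) :=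
  let e : ℙ K (Fin 2 → K) ≃ Fin 5 := Finite.equivFinOfCardEq <| by
    rw [card_of_finrank_two K _ (Module.finrank_fin_fun K), hK]
  let f := (Equiv.permCongrHom e).toMonoidHom.comp (MulAction.toPermHom _ (ℙ K (Fin 2 → K)))
  have hf : Function.Injective f :=
    e.permCongrHom.injective.comp toPermHom_projectivization_injective
  (MonoidHom.ofInjective hf).trans <| MulEquiv.subgroupCongr <|
    MonoidHom.range_eq_alternatingGroup hf <| by
      rw [card_fin_two_of_card_eq_four hK, Nat.card_perm, Nat.card_fin]; rfl

end Matrix.SpecialLinearGroup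

/-- The alternating group `A₅` is isomorphic to `SL₂(𝔽₄)`. -/
theorem stmt_10 :
    Nonempty (alternatingGroup (Fin 5) ≃*
      Matrix.SpecialLinearGroup (Fin 2) (GaloisField 2 2)) :=
  ⟨(SpecialLinearGroup.mulEquivAlternatingGroupFinFive
    (by rw [GaloisField.card 2 2 two_ne_zero]; rfl)).symm⟩
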